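/- arXiv:2506.08001 — 2 statements merged into one kernel-verified Lean document; each statement's English description precedes it below -/
import Mathlib

section
/- For Q skew-symmetric with ‖Q‖ < 1 and R = (I + Q)(I − Q)⁻¹, the approximation R_k = (I + Q)(I + Σ_{i=1}^k Qⁱ) satisfies ‖R − R_k‖ ≤ (1 + ‖Q‖)·‖Q‖^{k+1}/(1 − ‖Q‖). -/
/-!
The tail of the Neumann series is `(1 - Q)⁻¹ - ∑_{i ≤ k} Qⁱ = Q^(k+1) (1 - Q)⁻¹`, and the
geometric series gives `‖(1 - Q)⁻¹‖ ≤ (1 - ‖Q‖)⁻¹`; multiplying by `1 + Q` costs a factor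
`1 + ‖Q‖`.
-/

open Matrix
open scoped Matrix.Norms.L2Operator

open Finset

theorem one_add_sum_Icc_pow_eq_sum_range {R : Type*} [Semiring R] (x : R) (k : ℕ) :
    1 + ∑ i ∈ Icc 1 k, x ^ i = ∑ i ∈ range (k + 1), x ^ i := by
  rw [sum_range_succ', ← Ico_add_one_right_eq_Icc, sum_Ico_eq_sum_range]
  simp [add_comm]

-- `‖1‖ = 1` fails in the zero ring, e.g. for `0 × 0` matrices.
theorem CStarRing.norm_one_le {E : Type*} [NormedRing E] [StarRing E] [CStarRing E] :
    ‖(1 : E)‖ ≤ 1 := by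
  cases subsingleton_or_nontrivial E
  · simp [Subsingleton.elim (1 : E) 0]
  · exact CStarRing.norm_one.le

section CompleteNormedRing

variable {R : Type*} [NormedRing R] [CompleteSpace R] {x : R}

namespace NormedRing

theorem inverse_one_sub_sub_sum_range_pow (hx : ‖x‖ < 1) (n : ℕ) :
    Ring.inverse (1 - x) - ∑ i ∈ range n, x ^ i = x ^ n * Ring.inverse (1 - x) := by
  rw [sub_eq_iff_eq_add', ← inverse_one_sub_nth_order' n hx]

theorem norm_inverse_one_sub_le (h1 : ‖(1 : R)‖ ≤ 1) (hx : ‖x‖ < 1) :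
    ‖Ring.inverse (1 - x)‖ ≤ (1 - ‖x‖)⁻¹ := by
  rw [← geom_series_eq_inverse x hx]
  linarith [tsum_geometric_le_of_norm_lt_one x hx]

end NormedRing

theorem norm_cayley_sub_truncation_le (h1 : ‖(1 : R)‖ ≤ 1) (hx : ‖x‖ < 1) (k : ℕ) :
    ‖(1 + x) * Ring.inverse (1 - x) - (1 + x) * ∑ i ∈ range (k + 1), x ^ i‖ ≤
      (1 + ‖x‖) * ‖x‖ ^ (k + 1) / (1 - ‖x‖) := by
  rw [← mul_sub, NormedRing.inverse_one_sub_sub_sum_range_pow hx, div_eq_mul_inv, mul_assoc]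
  calc ‖(1 + x) * (x ^ (k + 1) * Ring.inverse (1 - x))‖
      ≤ ‖1 + x‖ * (‖x ^ (k + 1)‖ * ‖Ring.inverse (1 - x)‖) :=
        (norm_mul_le _ _).trans (by gcongr; exact norm_mul_le _ _)
    _ ≤ (1 + ‖x‖) * (‖x‖ ^ (k + 1) * (1 - ‖x‖)⁻¹) := by
        gcongr
        · exact (norm_add_le _ _).trans (by gcongr)
        · exact norm_pow_le' x k.succ_pos
        · exact NormedRing.norm_inverse_one_sub_le h1 hx

end CompleteNormedRing

theorem cayley_neumann_truncation_error_general {n : ℕ} (Q : Matrix (Fin n) (Fin n) ℝ) (k : ℕ)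
    (hQ : ‖Q‖ < 1) :
    ‖(1 + Q) * (1 - Q)⁻¹ - (1 + Q) * (1 + ∑ i ∈ Finset.Icc 1 k, Q ^ i)‖ ≤
      (1 + ‖Q‖) * ‖Q‖ ^ (k + 1) / (1 - ‖Q‖) := by
  rw [nonsing_inv_eq_ringInverse, one_add_sum_Icc_pow_eq_sum_range]
  exact norm_cayley_sub_truncation_le CStarRing.norm_one_le hQ k

/-- Error bound for the truncated Cayley–Neumann parameterization. -/
theorem cayley_neumann_truncation_error {n : ℕ} (Q : Matrix (Fin n) (Fin n) ℝ) (k : ℕ)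
    (hskew : Qᵀ = -Q) (hQ : ‖Q‖ < 1) :
    ‖(1 + Q) * (1 - Q)⁻¹ - (1 + Q) * (1 + ∑ i ∈ Finset.Icc 1 k, Q ^ i)‖ ≤
      (1 + ‖Q‖) * ‖Q‖ ^ (k + 1) / (1 - ‖Q‖) :=
  cayley_neumann_truncation_error_general Q k hQ
end

section
/- Let v ∈ ℝ^m, let k ∈ {1,…,m}, and let S ⊆ {1,…,m} with k ∈ S such that S contains all indices l > k. Then there exists an orthogonal primitive matrix G = I_m + D(S)(G̃ − I_b)D(S)ᵀ, with G̃ orthogonal of size b = |S|, such that (Gv)_l = 0 for all l ∈ S with l > k, (Gv)_k ≥ 0, and (Gv)_l = v_l for all l ∉ S. Moreover, for every w ∈ ℝ^m with w_i = 0 for all i ≥ k, one has Gw = w. -/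
open Matrix

lemma aux_vecMulVec_mulVec {n : ℕ} (w y : Fin n → ℝ) :
    (vecMulVec w w).mulVec y = (∑ j, w j * y j) • w := by
  ext i; simp [mulVec, dotProduct, vecMulVec, Finset.sum_mul]
  exact Finset.sum_congr rfl fun _ _ => by ring

lemma aux_vecMulVec_sq {n : ℕ} (w : Fin n → ℝ) :
    (vecMulVec w w) * (vecMulVec w w) = (∑ j, w j ^ 2) • vecMulVec w w := by
  ext i j; simp [mul_apply, vecMulVec, Finset.sum_mul]
  exact Finset.sum_congr rfl fun _ _ => by ring

lemma aux_vecMulVec_symm {n : ℕ} (w : Fin n → ℝ) : (vecMulVec w w)ᵀ = vecMulVec w w := by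
  ext i j; simp [vecMulVec, transpose_apply]; ring

lemma aux_householder_symm {n : ℕ} (w : Fin n → ℝ) (c : ℝ) :
    (1 - c • vecMulVec w w)ᵀ = 1 - c • vecMulVec w w := by
  rw [transpose_sub, transpose_one, transpose_smul, aux_vecMulVec_symm]

lemma aux_householder_sq {n : ℕ} (w : Fin n → ℝ) (hs : ∑ j, w j ^ 2 ≠ 0) :
    (1 - (2 / ∑ j, w j ^ 2) • vecMulVec w w) * (1 - (2 / ∑ j, w j ^ 2) • vecMulVec w w) = 1 := by
  set s := ∑ j, w j ^ 2 with hs'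
  set V := vecMulVec w w with hV
  have hVV : V * V = s • V := aux_vecMulVec_sq w
  rw [mul_sub, sub_mul, sub_mul, one_mul, mul_one, Matrix.smul_mul, one_mul]
  rw [Matrix.mul_smul, hVV, smul_smul, smul_smul]
  have h2 : 2 / s * (2 / s) * s = 2 / s + 2 / s := by field_simp; ring
  rw [h2, add_smul]
  abel

lemma aux_householder_mulVec {n : ℕ} (w y : Fin n → ℝ) (c : ℝ) :
    ((1 - c • vecMulVec w w) - 1).mulVec y = -(c * (∑ j, w j * y j)) • w := by
  have h1 : (1 - c • vecMulVec w w) - 1 = -(c • vecMulVec w w) := by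
    rw [sub_sub_cancel_left]
  rw [h1, Matrix.neg_mulVec, Matrix.smul_mulVec, aux_vecMulVec_mulVec]
  rw [smul_smul, neg_smul]

/-- Key zeroing lemma: for a vector `v` and a set `S` containing `k` and all indices
`l > k`, there is a primitive orthogonal matrix `G = I + D(S)(G̃ - I)D(S)ᵀ` that zeroes
out the entries of `v` in `S` beyond `k`, makes the `k`-th entry nonnegative, leaves the
entries outside `S` untouched, and fixes every vector supported on indices `< k`. -/
theorem zeroing_primitive {m : ℕ} (v : Fin m → ℝ) (S : Finset (Fin m)) (k : Fin m)
    (hk : k ∈ S) (htail : ∀ l : Fin m, k < l → l ∈ S) :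
    ∃ G' : Matrix (Fin S.card) (Fin S.card) ℝ,
      (G'ᵀ * G' = 1 ∧ G' * G'ᵀ = 1) ∧
      let f : Fin S.card → Fin m := fun j => (S.orderIsoOfFin rfl j : Fin m)
      let D : Matrix (Fin m) (Fin S.card) ℝ := fun i j => if f j = i then 1 else 0
      let G : Matrix (Fin m) (Fin m) ℝ := 1 + D * (G' - 1) * Dᵀ
      (∀ l ∈ S, k < l → G.mulVec v l = 0) ∧
      0 ≤ G.mulVec v k ∧
      (∀ l, l ∉ S → G.mulVec v l = v l) ∧
      (∀ w : Fin m → ℝ, (∀ i : Fin m, k ≤ i → w i = 0) → G.mulVec w = w) := by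
  classical
  set b := S.card with hb
  set e := S.orderIsoOfFin rfl with he
  set j0 : Fin b := e.symm ⟨k, hk⟩ with hj0
  have hej0 : ((e j0 : S) : Fin m) = k := by rw [hj0, OrderIso.apply_symm_apply]
  -- order facts
  have hle : ∀ j : Fin b, j0 ≤ j ↔ k ≤ ((e j : S) : Fin m) := by
    intro j
    rw [← e.le_iff_le, hj0, OrderIso.apply_symm_apply]
    exact Iff.rfl
  have hlt : ∀ j : Fin b, j0 < j ↔ k < ((e j : S) : Fin m) := by
    intro j
    rw [← e.lt_iff_lt, hj0, OrderIso.apply_symm_apply]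
    exact Iff.rfl
  set x : Fin b → ℝ := fun j => v ((e j : S) : Fin m) with hx
  set x' : Fin b → ℝ := fun j => if j0 ≤ j then x j else 0 with hx'
  have hsqnn : (0:ℝ) ≤ ∑ j, x' j ^ 2 := Finset.sum_nonneg fun _ _ => sq_nonneg _
  set r : ℝ := Real.sqrt (∑ j, x' j ^ 2) with hr
  have hr2 : r ^ 2 = ∑ j, x' j ^ 2 := Real.sq_sqrt hsqnn
  have hrnn : 0 ≤ r := Real.sqrt_nonneg _
  set w : Fin b → ℝ := fun j => x' j - (if j = j0 then r else 0) with hw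
  set s : ℝ := ∑ j, w j ^ 2 with hs
  set c : ℝ := 2 / s with hc
  -- computation of s and the inner product ⟨w, x⟩
  have hwx : ∑ j, w j * x j = r ^ 2 - r * x j0 := by
    have h1 : ∀ j, w j * x j = x' j ^ 2 - (if j = j0 then r * x j0 else 0) := by
      intro j
      rw [hw]
      by_cases hj : j = j0
      · subst hj
        simp [hx', le_refl]
        ring
      · simp [hj]
        by_cases hj2 : j0 ≤ j
        · simp [hx', hj2]; ring
        · simp [hx', hj2]
    rw [Finset.sum_congr rfl fun j _ => h1 j, Finset.sum_sub_distrib, ← hr2]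
    congr 1
    simp
  have hs2 : s = 2 * (r ^ 2 - r * x j0) := by
    have h1 : ∀ j, w j ^ 2 = x' j ^ 2 - 2 * (if j = j0 then r * x j0 else 0)
        + (if j = j0 then r ^ 2 else 0) := by
      intro j
      rw [hw]
      by_cases hj : j = j0
      · subst hj
        simp [hx', le_refl]
        ring
      · simp [hj]
    rw [hs, Finset.sum_congr rfl fun j _ => h1 j]
    rw [Finset.sum_add_distrib, Finset.sum_sub_distrib, ← hr2]
    simp
    ring
  -- if s = 0 then w = 0
  have hs0 : s = 0 → w = 0 := by
    intro h0
    funext j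
    have hj := (Finset.sum_eq_zero_iff_of_nonneg (fun j _ => sq_nonneg (w j))).1 h0 j
      (Finset.mem_univ j)
    simpa [pow_eq_zero_iff] using hj
  have horth : (1 - c • vecMulVec w w) * (1 - c • vecMulVec w w) = 1 := by
    by_cases hsz : s = 0
    · have hw0 : w = 0 := hs0 hsz
      have hV : vecMulVec w w = 0 := by
        funext i j
        simp [vecMulVec, hw0]
      rw [hV, smul_zero, sub_zero, one_mul]
    · exact aux_householder_sq w hsz
  refine ⟨1 - c • vecMulVec w w, ⟨?_, ?_⟩, ?_⟩
  · rw [aux_householder_symm]; exact horth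
  · rw [aux_householder_symm]; exact horth
  intro f D G
  have hf : f = fun j => ((e j : S) : Fin m) := rfl
  have hD : D = fun i j => if f j = i then 1 else 0 := rfl
  -- D-transpose action
  have hDt : ∀ y : Fin m → ℝ, Dᵀ.mulVec y = fun j => y (f j) := by
    intro y
    funext j
    simp [hD, mulVec, dotProduct, transpose_apply, Matrix.transpose]
  -- D action at a point of S
  have hDS : ∀ (u : Fin b → ℝ) (l : Fin m) (hl : l ∈ S),
      D.mulVec u l = u (e.symm ⟨l, hl⟩) := by
    intro u l hl
    have hiff : ∀ j : Fin b, f j = l ↔ j = e.symm ⟨l, hl⟩ := by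
      intro j
      rw [hf]
      constructor
      · intro h
        have : e j = ⟨l, hl⟩ := Subtype.ext h
        rw [← this, OrderIso.symm_apply_apply]
      · intro h
        rw [h]
        simp [OrderIso.apply_symm_apply]
    simp only [hD, mulVec, dotProduct]
    simp_rw [hiff]
    simp
  have hDnS : ∀ (u : Fin b → ℝ) (l : Fin m), l ∉ S → D.mulVec u l = 0 := by
    intro u l hl
    simp only [hD, mulVec, dotProduct, hf]
    apply Finset.sum_eq_zero
    intro j _
    have : ((e j : S) : Fin m) ≠ l := by
      intro h
      exact hl (h ▸ (e j).2)
    simp [this]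
  -- general mulVec decomposition
  have hGm : ∀ y : Fin m → ℝ,
      G.mulVec y = y + D.mulVec (((1 - c • vecMulVec w w) - 1).mulVec (fun j => y (f j))) := by
    intro y
    show (1 + D * ((1 - c • vecMulVec w w) - 1) * Dᵀ).mulVec y = _
    rw [Matrix.add_mulVec, Matrix.one_mulVec, ← Matrix.mulVec_mulVec, ← Matrix.mulVec_mulVec,
      hDt]
  -- the key computation: (G' - 1) applied to x gives -w
  have hkey : ((1 - c • vecMulVec w w) - 1).mulVec x = -w := by
    rw [aux_householder_mulVec]
    by_cases hsz : s = 0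
    · have hw0 : w = 0 := hs0 hsz
      simp [hw0]
    · have h1 : c * (∑ j, w j * x j) = 1 := by
        rw [hc, hwx]
        rw [hs2] at hsz ⊢
        field_simp
        exact div_self (fun h => hsz (by linear_combination 2 * h))
      rw [h1]
      simp
  -- vector x ∘ f is x
  have hxf : (fun j => v (f j)) = x := by
    funext j
    rw [hf, hx]
  -- conclusion 1
  refine ⟨?_, ?_, ?_, ?_⟩
  · intro l hl hkl
    rw [hGm, hxf] at *
    show v l + D.mulVec (((1 - c • vecMulVec w w) - 1).mulVec x) l = 0
    rw [hkey, hDS (-w) l hl]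
    have hj : j0 < e.symm ⟨l, hl⟩ := by
      rw [hlt, OrderIso.apply_symm_apply]
      exact hkl
    have hxl : x (e.symm ⟨l, hl⟩) = v l := by
      rw [hx]
      simp [OrderIso.apply_symm_apply]
    have hx'j : x' (e.symm ⟨l, hl⟩) = v l := by
      simp only [hx']
      rw [if_pos hj.le, hxl]
    have hwj : w (e.symm ⟨l, hl⟩) = v l := by
      simp only [hw]
      rw [if_neg hj.ne', hx'j, sub_zero]
    simp [hwj]
  · rw [hGm, hxf]
    show 0 ≤ v k + D.mulVec (((1 - c • vecMulVec w w) - 1).mulVec x) k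
    rw [hkey, hDS (-w) k hk]
    have hsymm : e.symm ⟨k, hk⟩ = j0 := rfl
    have hxk : x j0 = v k := by
      simp only [hx]
      rw [hej0]
    have hx'0 : x' j0 = v k := by
      simp only [hx']
      rw [if_pos (le_refl j0), hxk]
    have hwj0 : w j0 = v k - r := by
      simp only [hw, if_true]
      rw [hx'0]
    rw [hsymm]
    simp [hwj0]
    linarith
  · intro l hl
    rw [hGm, hxf]
    show v l + D.mulVec (((1 - c • vecMulVec w w) - 1).mulVec x) l = v l
    rw [hkey, hDnS (-w) l hl, add_zero]
  · intro W hW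
    rw [hGm]
    have hWf : ∀ j, w j * W (f j) = 0 := by
      intro j
      by_cases hj : j0 ≤ j
      · have : W (f j) = 0 := hW _ ((hle j).1 hj)
        rw [hf] at this ⊢
        rw [this, mul_zero]
      · have hwj : w j = 0 := by
          rw [hw]
          have hne : j ≠ j0 := fun h => hj (h ▸ le_refl j0)
          simp [hx', hj, hne]
        rw [hwj, zero_mul]
    rw [aux_householder_mulVec]
    have : (∑ j, w j * W (f j)) = 0 := Finset.sum_eq_zero fun j _ => hWf j
    rw [this]
    simp
end
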